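/- Let c, m > 0 and write p⁰ = √((cm)² + |p|²) for p ∈ ℝ³. Let 0 < β_ℓ ≤ β_u, U_u ≥ 0, a_u > 0. Set C₁ = a_u / ∫ e^{−c β_u q⁰} dq/q⁰ and C₂ = β_ℓ(√(c² + U_u²) − U_u). Then for every α ∈ [0, a_u], every β ∈ [β_ℓ, β_u], every U ∈ ℝ³ with |U| ≤ U_u, and every p ∈ ℝ³: (α / ∫ e^{−cβ q⁰} dq/q⁰) · e^{−β(√(c²+|U|²)·p⁰ − ⟨U,p⟩)} ≤ C₁ e^{−C₂ p⁰}. -/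

import Mathlib

/-!
The normalising integral `∫ e^{-b q⁰} dq/q⁰` is finite and positive for `b > 0`, since its
integrand is at most `e^{-b|q|}/(cm)`, and it decreases in `b`; so the prefactor
`α / ∫ e^{-cβ q⁰} dq/q⁰` is at most `C₁`. In the exponent, Cauchy–Schwarz and `|p| ≤ p⁰` give
`Ũ⁰ p⁰ - ⟨U, p⟩ ≥ (Ũ⁰ - |U|) p⁰`, and `u ↦ √(c² + u²) - u` is decreasing, so
`β (Ũ⁰ p⁰ - ⟨U, p⟩) ≥ C₂ p⁰`.
-/

open MeasureTheory Module Real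
open scoped Nat

lemma le_sqrt_sq_add_sq (c u : ℝ) : u ≤ √(c ^ 2 + u ^ 2) :=
  (le_abs_self u).trans (abs_le_sqrt (by nlinarith))

section

variable {E : Type*} [NormedAddCommGroup E]

lemma abs_le_sqrt_sq_add_norm_sq (a : ℝ) (q : E) : |a| ≤ √(a ^ 2 + ‖q‖ ^ 2) :=
  abs_le_sqrt (by nlinarith [sq_nonneg ‖q‖])

lemma sqrt_sq_add_norm_sq_pos {a : ℝ} (ha : a ≠ 0) (q : E) : 0 < √(a ^ 2 + ‖q‖ ^ 2) :=
  (abs_pos.2 ha).trans_le (abs_le_sqrt_sq_add_norm_sq a q)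

lemma continuous_exp_neg_mul_sqrt_div_sqrt {a : ℝ} (ha : a ≠ 0) (b : ℝ) :
    Continuous fun q : E ↦ exp (-b * √(a ^ 2 + ‖q‖ ^ 2)) / √(a ^ 2 + ‖q‖ ^ 2) :=
  Continuous.div (by fun_prop) (by fun_prop) fun q ↦ (sqrt_sq_add_norm_sq_pos ha q).ne'

lemma exp_neg_mul_le_mul_one_add_rpow {b r : ℝ} (hb : 0 < b) (hr : 0 ≤ r) (n : ℕ) :
    exp (-b * r) ≤ exp b * n ! / b ^ n * (1 + r) ^ (-(n : ℝ)) := by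
  have hX : 0 < b * (1 + r) := by positivity
  have hexp : exp (-b * r) = exp b / exp (b * (1 + r)) := by rw [← exp_sub]; ring_nf
  rw [hexp, rpow_neg (by linarith), rpow_natCast]
  calc exp b / exp (b * (1 + r)) ≤ exp b / ((b * (1 + r)) ^ n / n !) :=
        div_le_div_of_nonneg_left (exp_pos b).le (by positivity)
          (pow_div_factorial_le_exp _ hX.le n)
    _ = exp b * n ! / b ^ n * ((1 + r) ^ n)⁻¹ := by rw [mul_pow]; field_simp

variable [NormedSpace ℝ E] [FiniteDimensional ℝ E] [MeasurableSpace E] [BorelSpace E]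
  (μ : Measure E) [μ.IsAddHaarMeasure]

lemma integrable_exp_neg_mul_norm {b : ℝ} (hb : 0 < b) :
    Integrable (fun x ↦ exp (-b * ‖x‖)) μ := by
  refine ((integrable_one_add_norm (r := finrank ℝ E + 1) (by linarith)).const_mul
    (exp b * (finrank ℝ E + 1)! / b ^ (finrank ℝ E + 1))).mono' (by fun_prop) ?_
  refine Filter.Eventually.of_forall fun x ↦ ?_
  rw [norm_of_nonneg (exp_pos _).le]
  exact_mod_cast exp_neg_mul_le_mul_one_add_rpow hb (norm_nonneg x) (finrank ℝ E + 1)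

variable {μ} in
lemma integrable_exp_neg_mul_sqrt_div_sqrt {a b : ℝ} (ha : a ≠ 0) (hb : 0 < b) :
    Integrable (fun q : E ↦ exp (-b * √(a ^ 2 + ‖q‖ ^ 2)) / √(a ^ 2 + ‖q‖ ^ 2)) μ := by
  refine ((integrable_exp_neg_mul_norm μ hb).div_const |a|).mono'
    (continuous_exp_neg_mul_sqrt_div_sqrt ha b).aestronglyMeasurable
    (Filter.Eventually.of_forall fun q ↦ ?_)
  have hq := sqrt_sq_add_norm_sq_pos ha q
  rw [norm_of_nonneg (by positivity)]
  refine div_le_div₀ (exp_pos _).le (exp_le_exp.2 ?_) (abs_pos.2 ha)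
    (abs_le_sqrt_sq_add_norm_sq a q)
  nlinarith [le_sqrt_sq_add_sq a ‖q‖]

variable {μ} in
lemma integral_exp_neg_mul_sqrt_div_sqrt_pos {a b : ℝ} (ha : a ≠ 0) (hb : 0 < b) :
    0 < ∫ q : E, exp (-b * √(a ^ 2 + ‖q‖ ^ 2)) / √(a ^ 2 + ‖q‖ ^ 2) ∂μ :=
  integral_pos_of_integrable_nonneg_nonzero (x := 0) (continuous_exp_neg_mul_sqrt_div_sqrt ha b)
    (integrable_exp_neg_mul_sqrt_div_sqrt ha hb)
    (fun q ↦ (div_pos (exp_pos _) (sqrt_sq_add_norm_sq_pos ha q)).le)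
    (div_pos (exp_pos _) (sqrt_sq_add_norm_sq_pos ha 0)).ne'

variable {μ} in
lemma antitoneOn_integral_exp_neg_mul_sqrt_div_sqrt {a : ℝ} (ha : a ≠ 0) :
    AntitoneOn (fun b ↦ ∫ q : E, exp (-b * √(a ^ 2 + ‖q‖ ^ 2)) / √(a ^ 2 + ‖q‖ ^ 2) ∂μ)
      (Set.Ioi 0) := by
  intro b hb b' hb' hbb'
  refine integral_mono (integrable_exp_neg_mul_sqrt_div_sqrt ha hb')
    (integrable_exp_neg_mul_sqrt_div_sqrt ha hb) fun q ↦ ?_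
  gcongr

end

lemma antitone_sqrt_sq_add_sq_sub (c : ℝ) : Antitone fun u : ℝ ↦ √(c ^ 2 + u ^ 2) - u := by
  intro u v huv
  have hu := le_sqrt_sq_add_sq c u
  have hsq := sq_sqrt (by positivity : 0 ≤ c ^ 2 + u ^ 2)
  have : √(c ^ 2 + v ^ 2) ≤ √(c ^ 2 + u ^ 2) + (v - u) := by
    rw [sqrt_le_left (by linarith [sqrt_nonneg (c ^ 2 + u ^ 2)])]
    nlinarith
  linarith

lemma sqrt_sub_mul_le_sqrt_mul_sub_inner {F : Type*} [NormedAddCommGroup F]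
    [InnerProductSpace ℝ F] (a c : ℝ) {u : ℝ} {U : F} (hU : ‖U‖ ≤ u) (p : F) :
    (√(c ^ 2 + u ^ 2) - u) * √(a ^ 2 + ‖p‖ ^ 2) ≤
      √(c ^ 2 + ‖U‖ ^ 2) * √(a ^ 2 + ‖p‖ ^ 2) - inner ℝ U p := by
  have hinner : inner ℝ U p ≤ ‖U‖ * √(a ^ 2 + ‖p‖ ^ 2) :=
    (real_inner_le_norm U p).trans (by gcongr; exact le_sqrt_sq_add_sq a ‖p‖)
  nlinarith [mul_le_mul_of_nonneg_right (antitone_sqrt_sq_add_sq_sub c hU)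
    (sqrt_nonneg (a ^ 2 + ‖p‖ ^ 2))]

theorem stmt_8_general (c m : ℝ) (hc : 0 < c) (hm : 0 < m)
    (βl βu : ℝ) (hβl : 0 < βl)
    (Uu au : ℝ)
    (C1 C2 : ℝ)
    (hC1 : C1 = au / ∫ q : EuclideanSpace ℝ (Fin 3),
      Real.exp (-(c * βu) * Real.sqrt ((c * m) ^ 2 + ‖q‖ ^ 2)) /
        Real.sqrt ((c * m) ^ 2 + ‖q‖ ^ 2))
    (hC2 : C2 = βl * (Real.sqrt (c ^ 2 + Uu ^ 2) - Uu)) :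
    ∀ α ∈ Set.Icc (0 : ℝ) au, ∀ β ∈ Set.Icc βl βu,
      ∀ U : EuclideanSpace ℝ (Fin 3), ‖U‖ ≤ Uu →
      ∀ p : EuclideanSpace ℝ (Fin 3),
        (α / ∫ q : EuclideanSpace ℝ (Fin 3),
            Real.exp (-(c * β) * Real.sqrt ((c * m) ^ 2 + ‖q‖ ^ 2)) /
              Real.sqrt ((c * m) ^ 2 + ‖q‖ ^ 2)) *
          Real.exp (-β * (Real.sqrt (c ^ 2 + ‖U‖ ^ 2) *
            Real.sqrt ((c * m) ^ 2 + ‖p‖ ^ 2) - (inner ℝ U p : ℝ))) ≤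
        C1 * Real.exp (-C2 * Real.sqrt ((c * m) ^ 2 + ‖p‖ ^ 2)) := by
  rintro α ⟨hα, hαau⟩ β ⟨hβlβ, hββu⟩ U hU p
  have hcm : c * m ≠ 0 := (mul_pos hc hm).ne'
  have hβ : 0 < β := hβl.trans_le hβlβ
  have hcβ : 0 < c * β := mul_pos hc hβ
  have hcβu : 0 < c * βu := hcβ.trans_le (by gcongr)
  have hprefactor : α / (∫ q : EuclideanSpace ℝ (Fin 3),
      exp (-(c * β) * √((c * m) ^ 2 + ‖q‖ ^ 2)) / √((c * m) ^ 2 + ‖q‖ ^ 2)) ≤ C1 := by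
    rw [hC1]
    exact div_le_div₀ (hα.trans hαau) hαau (integral_exp_neg_mul_sqrt_div_sqrt_pos hcm hcβu)
      (antitoneOn_integral_exp_neg_mul_sqrt_div_sqrt hcm hcβ hcβu (by gcongr))
  have hexponent : -β * (√(c ^ 2 + ‖U‖ ^ 2) * √((c * m) ^ 2 + ‖p‖ ^ 2) - inner ℝ U p) ≤
      -C2 * √((c * m) ^ 2 + ‖p‖ ^ 2) := by
    have hlorentz := sqrt_sub_mul_le_sqrt_mul_sub_inner (c * m) c hU p
    have hd : 0 ≤ (√(c ^ 2 + Uu ^ 2) - Uu) * √((c * m) ^ 2 + ‖p‖ ^ 2) :=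
      mul_nonneg (sub_nonneg.2 (le_sqrt_sq_add_sq c Uu)) (sqrt_nonneg _)
    rw [hC2]
    nlinarith
  exact mul_le_mul hprefactor (exp_le_exp.2 hexponent) (exp_pos _).le
    ((div_nonneg hα (integral_exp_neg_mul_sqrt_div_sqrt_pos hcm hcβ).le).trans hprefactor)

theorem stmt_8 (c m : ℝ) (hc : 0 < c) (hm : 0 < m)
    (βl βu : ℝ) (hβl : 0 < βl) (hβlu : βl ≤ βu)
    (Uu au : ℝ) (hUu : 0 ≤ Uu) (hau : 0 < au)
    (C1 C2 : ℝ)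
    (hC1 : C1 = au / ∫ q : EuclideanSpace ℝ (Fin 3),
      Real.exp (-(c * βu) * Real.sqrt ((c * m) ^ 2 + ‖q‖ ^ 2)) /
        Real.sqrt ((c * m) ^ 2 + ‖q‖ ^ 2))
    (hC2 : C2 = βl * (Real.sqrt (c ^ 2 + Uu ^ 2) - Uu)) :
    ∀ α ∈ Set.Icc (0 : ℝ) au, ∀ β ∈ Set.Icc βl βu,
      ∀ U : EuclideanSpace ℝ (Fin 3), ‖U‖ ≤ Uu →
      ∀ p : EuclideanSpace ℝ (Fin 3),
        (α / ∫ q : EuclideanSpace ℝ (Fin 3),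
            Real.exp (-(c * β) * Real.sqrt ((c * m) ^ 2 + ‖q‖ ^ 2)) /
              Real.sqrt ((c * m) ^ 2 + ‖q‖ ^ 2)) *
          Real.exp (-β * (Real.sqrt (c ^ 2 + ‖U‖ ^ 2) *
            Real.sqrt ((c * m) ^ 2 + ‖p‖ ^ 2) - (inner ℝ U p : ℝ))) ≤
        C1 * Real.exp (-C2 * Real.sqrt ((c * m) ^ 2 + ‖p‖ ^ 2)) :=
  stmt_8_general c m hc hm βl βu hβl Uu au C1 C2 hC1 hC2
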